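/- Let (a₁,a₂,a₃,a₄,a₅) be a tuple of positive integers with a₁ = 1 and aᵢ ≤ a_{i+1} ≤ a₁+⋯+aᵢ+1 for i = 1,2,3,4. Then for every integer m ≥ 3 and every positive integer N, the m-gonal form ⟨a₁,…,a₅⟩_m locally represents N; that is, for every prime p the equation a₁P_m(x₁)+⋯+a₅P_m(x₅) = N has a solution in ℤ_p⁵. -/

import Mathlib

/-!
Put `b = m - 2`, so that the `i`-th summand is `aᵢ (b (xᵢ² - xᵢ) + 2 xᵢ)`.

If `‖b‖ ≠ ‖2‖` in `ℤ_p`, Hensel's lemma at `x = N` solves `b (x² - x) + 2 x = 2 N` in the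
variable whose coefficient is `a 0 = 1`: the value there is `b N (N - 1) ∈ 2 b ℤ_p`, while the
derivative `b (2 N - 1) + 2` has norm `max ‖b‖ ‖2‖`.

If `‖b‖ = ‖2‖`, then `b (2 e + 1) = 2` for some `e ∈ ℤ_p` (units of `ℤ_2` are odd), and completing
the square gives `b (x² - x) + 2 x = b ((x + e)² - e²)`. The equation becomes
`∑ aᵢ uᵢ² = (2 e + 1) N + e² ∑ aᵢ`, so it suffices that the diagonal form with coefficients
`a 0 = 1, a 1, a 2, a 3` is universal over `ℤ_p`; by scaling, only `D` with `p² ∤ D` matter.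
For odd `p` the form has three unit coefficients, except for `p = 3`, where it is
`⟨1, a 1⟩ ⊥ 3 ⟨1, a 3 / 3⟩`; a binary form with unit coefficients represents every unit, by
counting over `𝔽_p` and Hensel. For `p = 2`, a finite check modulo `16` over the 27 possible
triples `(a 1, a 2, a 3)` gives an approximate solution with an odd coordinate at a coefficient
not divisible by `4`, and Hensel lifts it.
-/

open Polynomial

theorem FiniteField.exists_mul_sq_add_mul_sq_eq {K : Type*} [Field K] [Fintype K]
    (hK : ringChar K ≠ 2) {a b : K} (ha : a ≠ 0) (hb : b ≠ 0) (d : K) :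
    ∃ x y, a * x ^ 2 + b * y ^ 2 = d := by
  obtain ⟨x, y, h⟩ := FiniteField.exists_root_sum_quadratic
    (f := C a * X ^ 2 - C d) (g := C b * X ^ 2)
    (by rw [degree_sub_C (by rw [degree_C_mul_X_pow 2 ha]; norm_num), degree_C_mul_X_pow 2 ha]; rfl)
    (by rw [degree_C_mul_X_pow 2 hb]; rfl) (FiniteField.odd_card_of_char_ne_two hK)
  simp only [eval_sub, eval_mul, eval_C, eval_pow, eval_X] at h
  exact ⟨x, y, by linear_combination h⟩

theorem Finset.sum_mul_sq_update {R ι : Type*} [CommRing R] [Fintype ι] [DecidableEq ι]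
    (a x : ι → R) (j : ι) (u : R) :
    ∑ i, a i * Function.update x j u i ^ 2 = ∑ i, a i * x i ^ 2 + a j * (u ^ 2 - x j ^ 2) := by
  have h : ∀ i ∈ univ.erase j, a i * Function.update x j u i ^ 2 = a i * x i ^ 2 :=
    fun i hi => by rw [Function.update_of_ne (ne_of_mem_erase hi)]
  rw [← add_sum_erase _ _ (mem_univ j), sum_congr rfl h,
    ← add_sum_erase univ (fun i => a i * x i ^ 2) (mem_univ j), Function.update_self]
  ring

theorem polygonal_eq_of_mul_two_mul_add_one_eq_two {R : Type*} [CommRing R] {b e : R}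
    (he : b * (2 * e + 1) = 2) (u : R) :
    b * ((u - e) ^ 2 - (u - e)) + 2 * (u - e) = b * (u ^ 2 - e ^ 2) := by
  linear_combination (e - u) * he

theorem sum_polygonal_eq_of_sum_mul_sq_eq {R ι : Type*} [CommRing R] [Fintype ι] {a u : ι → R}
    {b e N : R} (he : b * (2 * e + 1) = 2)
    (hu : ∑ i, a i * u i ^ 2 = (2 * e + 1) * N + e ^ 2 * ∑ i, a i) :
    ∑ i, a i * (b * ((u i - e) ^ 2 - (u i - e)) + 2 * (u i - e)) = 2 * N := by
  have h : ∀ i, a i * (b * ((u i - e) ^ 2 - (u i - e)) + 2 * (u i - e))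
      = b * (a i * u i ^ 2) - b * e ^ 2 * a i := fun i => by
    rw [polygonal_eq_of_mul_two_mul_add_one_eq_two he]; ring
  simp only [h, Finset.sum_sub_distrib, ← Finset.mul_sum, hu]
  linear_combination N * he

namespace PadicInt

variable {p : ℕ} [Fact p.Prime]

theorem norm_mul_le_left (x y : ℤ_[p]) : ‖x * y‖ ≤ ‖x‖ := by
  rw [norm_mul]
  exact mul_le_of_le_one_right (norm_nonneg x) (norm_le_one y)

theorem toZMod_eq_zero_iff {z : ℤ_[p]} : toZMod z = 0 ↔ ¬IsUnit z := by
  rw [← RingHom.mem_ker, ker_toZMod, IsLocalRing.mem_maximalIdeal, mem_nonunits_iff]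

theorem isUnit_iff_toZMod_ne_zero {z : ℤ_[p]} : IsUnit z ↔ toZMod z ≠ 0 := by
  rw [ne_eq, toZMod_eq_zero_iff, not_not]

theorem isUnit_intCast_iff {k : ℤ} : IsUnit (k : ℤ_[p]) ↔ ¬(p : ℤ) ∣ k := by
  rw [← norm_int_lt_one_iff_dvd, ← not_isUnit_iff, not_not]

theorem isUnit_two (hp : p ≠ 2) : IsUnit (2 : ℤ_[p]) := by
  have h : ‖((2 : ℕ) : ℤ_[p])‖ = 1 :=
    norm_natCast_eq_one_iff.mpr ((Nat.coprime_primes Fact.out Nat.prime_two).mpr hp)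
  exact isUnit_iff.mpr (by simpa using h)

theorem two_dvd_sub_one_of_isUnit {w : ℤ_[p]} (hw : IsUnit w) : (2 : ℤ_[p]) ∣ w - 1 := by
  rcases eq_or_ne p 2 with rfl | hp
  · have h : toZMod (w - 1) = 0 := by
      have hw' := isUnit_iff_toZMod_ne_zero.mp hw
      rw [map_sub, map_one, sub_eq_zero]
      generalize toZMod w = t at hw'
      fin_cases t
      exacts [absurd rfl hw', rfl]
    simpa using (norm_lt_one_iff_dvd _).mp (not_isUnit_iff.mp (toZMod_eq_zero_iff.mp h))
  · exact (isUnit_two hp).dvd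

theorem exists_quadratic_eq_zero {a b c x₀ : ℤ_[p]}
    (h : ‖a * x₀ ^ 2 + b * x₀ + c‖ < ‖2 * a * x₀ + b‖ ^ 2) :
    ∃ x, a * x ^ 2 + b * x + c = 0 := by
  let F : ℤ_[p][X] := C a * X ^ 2 + C b * X + C c
  have hF : ∀ y, F.aeval y = a * y ^ 2 + b * y + c := fun y => by simp [F]
  have hF' : ∀ y, F.derivative.aeval y = 2 * a * y + b := fun y => by
    simp only [F, coe_aeval_eq_eval, derivative_add, derivative_C_mul_X_pow, derivative_C_mul_X,
      derivative_C, eval_add, eval_mul, eval_C, eval_pow, eval_X, eval_zero]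
    ring
  obtain ⟨x, hx, -⟩ := hensels_lemma (F := F) (a := x₀) (by rwa [hF, hF'])
  exact ⟨x, by rwa [hF] at hx⟩

theorem exists_polygonal_eq_of_norm_ne {b : ℤ_[p]} (hb : ‖b‖ ≠ ‖(2 : ℤ_[p])‖) (N : ℤ) :
    ∃ x, b * (x ^ 2 - x) + 2 * x = 2 * N := by
  have h2 : 0 < ‖(2 : ℤ_[p])‖ := norm_pos_iff.mpr two_ne_zero
  obtain ⟨t, ht⟩ := Int.even_mul_pred_self N
  have hval : ‖b * N ^ 2 + (2 - b) * N + -(2 * N)‖ ≤ ‖(2 : ℤ_[p])‖ * ‖b‖ := by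
    have ht' := congrArg (Int.cast : ℤ → ℤ_[p]) ht
    push_cast at ht'
    rw [show b * N ^ 2 + (2 - b) * N + -(2 * N) = 2 * b * t by linear_combination b * ht',
      ← norm_mul]
    exact norm_mul_le_left _ _
  suffices h : ‖b * N ^ 2 + (2 - b) * N + -(2 * N)‖ < ‖2 * b * N + (2 - b)‖ ^ 2 by
    obtain ⟨x, hx⟩ := exists_quadratic_eq_zero h
    exact ⟨x, by linear_combination hx⟩
  rw [show 2 * b * N + (2 - b) = b * (2 * N - 1) + 2 by ring]
  rcases hb.lt_or_gt with hlt | hgt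
  · have hder : ‖b * (2 * N - 1) + 2‖ = ‖(2 : ℤ_[p])‖ := by
      have : ‖b * (2 * N - 1)‖ < ‖(2 : ℤ_[p])‖ := (norm_mul_le_left _ _).trans_lt hlt
      rw [norm_add_eq_max_of_ne this.ne, max_eq_right this.le]
    rw [hder]
    exact hval.trans_lt ((mul_lt_mul_of_pos_left hlt h2).trans_eq (sq _).symm)
  · -- `‖2‖ < ‖b‖ ≤ 1` forces `p = 2`, where `2 N - 1` is odd
    have hodd : ‖(2 * N - 1 : ℤ_[p])‖ = 1 := by
      have : ‖(2 * N : ℤ_[p])‖ < ‖(-1 : ℤ_[p])‖ := by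
        rw [norm_neg, norm_one]
        exact (norm_mul_le_left _ _).trans_lt (hgt.trans_le (norm_le_one b))
      rw [sub_eq_add_neg, norm_add_eq_max_of_ne this.ne, max_eq_right this.le, norm_neg, norm_one]
    have hbN : ‖b * (2 * N - 1)‖ = ‖b‖ := by rw [norm_mul, hodd, mul_one]
    have hder : ‖b * (2 * N - 1) + 2‖ = ‖b‖ := by
      rw [norm_add_eq_max_of_ne (hbN ▸ hgt.ne'), hbN, max_eq_left hgt.le]
    rw [hder]
    exact hval.trans_lt ((mul_lt_mul_of_pos_right hgt (h2.trans hgt)).trans_eq (sq _).symm)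

theorem exists_mul_two_mul_add_one_eq_two {b : ℤ_[p]} (hb : ‖b‖ = ‖(2 : ℤ_[p])‖) :
    ∃ e, b * (2 * e + 1) = 2 := by
  have h2 : ‖(2 : ℤ_[p])‖ ≠ 0 := norm_ne_zero_iff.mpr two_ne_zero
  have hb0 : (b : ℚ_[p]) ≠ 0 := by
    rw [← norm_ne_zero_iff, padic_norm_e_of_padicInt, hb]; exact h2
  have hw : ‖(2 : ℚ_[p]) / b‖ = 1 := by
    rw [norm_div, padic_norm_e_of_padicInt, hb]
    exact div_self h2
  let w : ℤ_[p] := ⟨2 / b, hw.le⟩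
  obtain ⟨e, he⟩ := two_dvd_sub_one_of_isUnit (isUnit_iff.mpr hw : IsUnit w)
  have hbw : b * w = 2 := by
    apply Subtype.ext
    change (b : ℚ_[p]) * (2 / b) = ((2 : ℤ_[p]) : ℚ_[p])
    rw [mul_div_cancel₀ _ hb0]; norm_cast
  exact ⟨e, by linear_combination hbw - b * he⟩

theorem exists_mul_sq_eq_of_norm_lt {a σ r : ℤ_[p]} (ha : IsUnit a) (hσ : IsUnit σ)
    (h : ‖a * σ ^ 2 - r‖ < ‖(2 : ℤ_[p])‖ ^ 2) : ∃ u, a * u ^ 2 = r := by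
  obtain ⟨u, hu⟩ := exists_quadratic_eq_zero (a := a) (b := 0) (c := -r) (x₀ := σ) (by
    simpa [norm_mul, isUnit_iff.mp ha, isUnit_iff.mp hσ, ← sub_eq_add_neg] using h)
  exact ⟨u, by linear_combination hu⟩

theorem exists_mul_sq_add_mul_sq_eq (hp : p ≠ 2) {a b d : ℤ_[p]} (ha : IsUnit a) (hb : IsUnit b)
    (hd : IsUnit d) : ∃ x y, a * x ^ 2 + b * y ^ 2 = d := by
  have hchar : ringChar (ZMod p) ≠ 2 := by rwa [ZMod.ringChar_zmod_n]
  obtain ⟨x', y', h'⟩ := FiniteField.exists_mul_sq_add_mul_sq_eq hchar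
    (isUnit_iff_toZMod_ne_zero.mp ha) (isUnit_iff_toZMod_ne_zero.mp hb) (toZMod d)
  obtain ⟨x₀, rfl⟩ := ZMod.ringHom_surjective toZMod x'
  obtain ⟨y₀, rfl⟩ := ZMod.ringHom_surjective toZMod y'
  have hres : ‖a * x₀ ^ 2 + b * y₀ ^ 2 - d‖ < ‖(2 : ℤ_[p])‖ ^ 2 := by
    rw [isUnit_iff.mp (isUnit_two hp), one_pow, ← not_isUnit_iff, ← toZMod_eq_zero_iff]
    simp [h']
  have hd' := isUnit_iff_toZMod_ne_zero.mp hd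
  by_cases hx₀ : toZMod x₀ = 0
  · have hy₀ : IsUnit y₀ := isUnit_iff_toZMod_ne_zero.mpr fun hy₀ => hd' (by simp [← h', hx₀, hy₀])
    obtain ⟨y, hy⟩ := exists_mul_sq_eq_of_norm_lt hb hy₀ (r := d - a * x₀ ^ 2)
      (by convert hres using 2; ring)
    exact ⟨x₀, y, by linear_combination hy⟩
  · obtain ⟨x, hx⟩ := exists_mul_sq_eq_of_norm_lt ha (isUnit_iff_toZMod_ne_zero.mpr hx₀)
      (r := d - b * y₀ ^ 2) (by convert hres using 2; ring)
    exact ⟨x, y₀, by linear_combination hx⟩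

theorem exists_mul_sq_add_mul_sq_add_mul_sq_eq (hp : p ≠ 2) {a b c : ℤ_[p]} (ha : IsUnit a)
    (hb : IsUnit b) (hc : IsUnit c) (d : ℤ_[p]) :
    ∃ x y z, a * x ^ 2 + b * y ^ 2 + c * z ^ 2 = d := by
  by_cases hdc : IsUnit (d - c)
  · obtain ⟨x, y, h⟩ := exists_mul_sq_add_mul_sq_eq hp ha hb hdc
    exact ⟨x, y, 1, by linear_combination h⟩
  · have hd : IsUnit d := by
      rw [← toZMod_eq_zero_iff, map_sub, sub_eq_zero] at hdc
      rwa [isUnit_iff_toZMod_ne_zero, hdc, ← isUnit_iff_toZMod_ne_zero]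
    obtain ⟨x, y, h⟩ := exists_mul_sq_add_mul_sq_eq hp ha hb hd
    exact ⟨x, y, 0, by linear_combination h⟩

theorem exists_sum_mul_sq_eq_of_forall_not_dvd {ι : Type*} [Fintype ι] {c : ι → ℤ_[p]}
    (h : ∀ d, ¬(p : ℤ_[p]) ^ 2 ∣ d → ∃ x : ι → ℤ_[p], ∑ i, c i * x i ^ 2 = d) (d : ℤ_[p]) :
    ∃ x : ι → ℤ_[p], ∑ i, c i * x i ^ 2 = d := by
  induction hn : d.valuation using Nat.strong_induction_on generalizing d with
  | _ n ih =>
    by_cases hd : (p : ℤ_[p]) ^ 2 ∣ d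
    · obtain ⟨d', rfl⟩ := hd
      rcases eq_or_ne d' 0 with rfl | hd'
      · exact ⟨0, by simp⟩
      have hlt : d'.valuation < n := by
        rw [← hn, valuation_mul (pow_ne_zero _ (NeZero.ne _)) hd', valuation_pow, valuation_p]
        omega
      obtain ⟨x, hx⟩ := ih _ hlt d' rfl
      refine ⟨fun i => p * x i, ?_⟩
      simp_rw [← hx, Finset.mul_sum]
      exact Finset.sum_congr rfl fun i _ => by ring
    · exact h d hd

theorem exists_sum_mul_sq_eq_of_isUnit_of_p_mul (hp : p ≠ 2) {a b c e : ℤ_[p]} (ha : IsUnit a)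
    (hb : IsUnit b) (hc : IsUnit c) (he : IsUnit e) (d : ℤ_[p]) :
    ∃ x : Fin 4 → ℤ_[p], ∑ i, ![a, b, p * c, p * e] i * x i ^ 2 = d := by
  refine exists_sum_mul_sq_eq_of_forall_not_dvd (fun d hd => ?_) d
  by_cases hu : IsUnit d
  · obtain ⟨x, y, h⟩ := exists_mul_sq_add_mul_sq_eq hp ha hb hu
    exact ⟨![x, y, 0, 0], by simp [Fin.sum_univ_four, h]⟩
  · obtain ⟨d', rfl⟩ := (norm_lt_one_iff_dvd d).mp (not_isUnit_iff.mp hu)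
    have hd' : IsUnit d' := by
      by_contra h
      obtain ⟨t, rfl⟩ := (norm_lt_one_iff_dvd d').mp (not_isUnit_iff.mp h)
      exact hd ⟨t, by ring⟩
    obtain ⟨x, y, h⟩ := exists_mul_sq_add_mul_sq_eq hp hc he hd'
    refine ⟨![0, 0, x, y], ?_⟩
    simp only [Fin.sum_univ_four, Matrix.cons_val]
    linear_combination (p : ℤ_[p]) * h

theorem exists_mul_sq_eq_of_eight_dvd {a σ r : ℤ_[2]} (ha : IsUnit a) (hσ : IsUnit σ)
    (h : (8 : ℤ_[2]) ∣ a * σ ^ 2 - r) : ∃ u, a * u ^ 2 = r := by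
  refine exists_mul_sq_eq_of_norm_lt ha hσ ?_
  obtain ⟨t, ht⟩ := h
  rw [ht, norm_mul, show (8 : ℤ_[2]) = 2 ^ 3 by norm_num, norm_pow,
    show ‖(2 : ℤ_[2])‖ = 2⁻¹ by simpa using norm_p (p := 2)]
  calc (2⁻¹ : ℝ) ^ 3 * ‖t‖ ≤ 2⁻¹ ^ 3 := mul_le_of_le_one_right (by norm_num) (norm_le_one t)
    _ < 2⁻¹ ^ 2 := by norm_num

theorem exists_intCast_mul_sq_eq_of_sixteen_dvd {a σ : ℤ} (ha : ¬4 ∣ a) (hσ : Odd σ)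
    {r : ℤ_[2]} (h : (16 : ℤ_[2]) ∣ r - a * σ ^ 2) : ∃ u, (a : ℤ_[2]) * u ^ 2 = r := by
  have hσu : IsUnit (σ : ℤ_[2]) := isUnit_intCast_iff.mpr (by simpa [← even_iff_two_dvd] using hσ)
  obtain ⟨t, ht⟩ := h
  rcases Int.emod_two_eq_zero_or_one a with ha2 | ha2
  · obtain ⟨a', rfl⟩ : ∃ a', a = 2 * a' := ⟨a / 2, by omega⟩
    have ha' : IsUnit (a' : ℤ_[2]) := isUnit_intCast_iff.mpr (by omega)
    obtain ⟨u, hu⟩ := exists_mul_sq_eq_of_eight_dvd ha' hσu (r := a' * σ ^ 2 + 8 * t) ⟨-t, by ring⟩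
    exact ⟨u, by push_cast at ht ⊢; linear_combination 2 * hu - ht⟩
  · exact exists_mul_sq_eq_of_eight_dvd (isUnit_intCast_iff.mpr (by omega)) hσu
      ⟨-2 * t, by linear_combination -ht⟩

theorem exists_sum_mul_sq_eq_of_sixteen_dvd {ι : Type*} [Fintype ι] [DecidableEq ι]
    (a c : ι → ℤ) (j : ι) (ha : ¬4 ∣ a j) (hc : Odd (c j)) {d : ℤ_[2]}
    (h : (16 : ℤ_[2]) ∣ d - ∑ i, (a i : ℤ_[2]) * (c i : ℤ_[2]) ^ 2) :
    ∃ x : ι → ℤ_[2], ∑ i, (a i : ℤ_[2]) * x i ^ 2 = d := by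
  obtain ⟨u, hu⟩ := exists_intCast_mul_sq_eq_of_sixteen_dvd ha hc
    (r := d - ∑ i, (a i : ℤ_[2]) * (c i : ℤ_[2]) ^ 2 + a j * c j ^ 2) (by simpa using h)
  refine ⟨Function.update (fun i => (c i : ℤ_[2])) j u, ?_⟩
  rw [Finset.sum_mul_sq_update, mul_sub, hu]
  ring

end PadicInt

-- The witnesses are the input of `PadicInt.exists_sum_mul_sq_eq_of_sixteen_dvd`.
theorem escalator_two_adic_table (a₁ a₂ a₃ : ℤ) (h₁ : 1 ≤ a₁ ∧ a₁ ≤ 2)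
    (h₂ : a₁ ≤ a₂ ∧ a₂ ≤ a₁ + 2) (h₃ : a₂ ≤ a₃ ∧ a₃ ≤ a₁ + a₂ + 2) (n : ℕ) (hn : n < 16)
    (hn4 : n % 4 ≠ 0) :
    ∃ c₀ < (4 : ℕ), ∃ c₁ < (4 : ℕ), ∃ c₂ < (4 : ℕ), ∃ c₃ < (4 : ℕ), ∃ j : Fin 4,
      ![(c₀ : ℤ), c₁, c₂, c₃] j % 2 = 1 ∧ ![1, a₁, a₂, a₃] j % 4 ≠ 0 ∧
      (∑ i, ![1, a₁, a₂, a₃] i * ![(c₀ : ℤ), c₁, c₂, c₃] i ^ 2) % 16 = n := by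
  simp only [Fin.sum_univ_four, Matrix.cons_val]
  obtain ⟨h₁, h₁'⟩ := h₁; obtain ⟨h₂, h₂'⟩ := h₂; obtain ⟨h₃, h₃'⟩ := h₃
  revert n
  interval_cases a₁ <;> interval_cases a₂ <;> interval_cases a₃ <;> decide

theorem escalator_two_adic_universal (a₁ a₂ a₃ : ℤ) (h₁ : 1 ≤ a₁ ∧ a₁ ≤ 2)
    (h₂ : a₁ ≤ a₂ ∧ a₂ ≤ a₁ + 2) (h₃ : a₂ ≤ a₃ ∧ a₃ ≤ a₁ + a₂ + 2) (d : ℤ_[2]) :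
    ∃ x : Fin 4 → ℤ_[2], ∑ i, ((![1, a₁, a₂, a₃] i : ℤ) : ℤ_[2]) * x i ^ 2 = d := by
  refine PadicInt.exists_sum_mul_sq_eq_of_forall_not_dvd (fun d hd => ?_) d
  have happr : (16 : ℤ_[2]) ∣ d - d.appr 4 := by
    have := PadicInt.appr_spec 4 d
    rwa [Ideal.mem_span_singleton, Nat.cast_ofNat, show (2 : ℤ_[2]) ^ 4 = 16 by norm_num] at this
  have hn4 : d.appr 4 % 4 ≠ 0 := fun h => hd <| by
    obtain ⟨t, ht⟩ := happr
    obtain ⟨k, hk⟩ := Nat.dvd_of_mod_eq_zero h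
    rw [hk] at ht
    push_cast at ht ⊢
    exact ⟨k + 4 * t, by linear_combination ht⟩
  obtain ⟨c₀, -, c₁, -, c₂, -, c₃, -, j, hc, ha, hsum⟩ :=
    escalator_two_adic_table a₁ a₂ a₃ h₁ h₂ h₃ _ (PadicInt.appr_lt d 4) hn4
  refine PadicInt.exists_sum_mul_sq_eq_of_sixteen_dvd _ ![(c₀ : ℤ), c₁, c₂, c₃] j
    (fun h => ha (Int.emod_eq_zero_of_dvd h)) (Int.odd_iff.mpr hc) ?_
  obtain ⟨t, ht⟩ := happr
  obtain ⟨q, hq⟩ : ∃ q : ℤ,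
      ∑ i, ![1, a₁, a₂, a₃] i * ![(c₀ : ℤ), c₁, c₂, c₃] i ^ 2 = d.appr 4 + 16 * q :=
    ⟨_, by rw [← hsum, Int.emod_add_mul_ediv]⟩
  have hq' := congrArg (Int.cast : ℤ → ℤ_[2]) hq
  push_cast at hq'
  exact ⟨t - q, by linear_combination ht - hq'⟩

theorem escalator_padic_universal_of_ne_two {p : ℕ} [hprime : Fact p.Prime] (hp : p ≠ 2)
    (a₁ a₂ a₃ : ℤ) (h₁ : 1 ≤ a₁ ∧ a₁ ≤ 2) (h₂ : a₁ ≤ a₂ ∧ a₂ ≤ a₁ + 2)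
    (h₃ : a₂ ≤ a₃ ∧ a₃ ≤ a₁ + a₂ + 2) (d : ℤ_[p]) :
    ∃ x : Fin 4 → ℤ_[p], ∑ i, ((![1, a₁, a₂, a₃] i : ℤ) : ℤ_[p]) * x i ^ 2 = d := by
  have hp3 : 3 ≤ p := (hprime.out.two_le.lt_of_ne' hp)
  have hunit : ∀ k : ℤ, 0 < k → k < p → IsUnit (k : ℤ_[p]) := fun k hk hkp =>
    PadicInt.isUnit_intCast_iff.mpr fun h => by have := Int.le_of_dvd hk h; omega
  have u₀ : IsUnit (1 : ℤ_[p]) := isUnit_one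
  have u₁ := hunit a₁ (by omega) (by omega)
  simp only [Fin.sum_univ_four, Matrix.cons_val, Int.cast_one]
  by_cases h₂p : (p : ℤ) ∣ a₂
  · by_cases h₃p : (p : ℤ) ∣ a₃
    · -- `p ≤ a₂ ≤ 4` forces `p = 3`, `a₂ = 3` and `a₃ ∈ {3, 6}`
      have hp4 : p ≠ 4 := by rintro rfl; exact absurd hprime.out (by norm_num)
      obtain rfl : p = 3 := by have := Int.le_of_dvd (by omega) h₂p; omega
      obtain ⟨c, rfl⟩ := h₃p
      obtain rfl : a₂ = 3 := by omega
      obtain ⟨x, hx⟩ := PadicInt.exists_sum_mul_sq_eq_of_isUnit_of_p_mul hp u₀ u₁ u₀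
        (hunit c (by omega) (by omega)) d
      refine ⟨x, ?_⟩
      simp only [Fin.sum_univ_four, Matrix.cons_val] at hx
      push_cast at hx ⊢
      linear_combination hx
    · obtain ⟨x, y, z, h⟩ := PadicInt.exists_mul_sq_add_mul_sq_add_mul_sq_eq hp u₀ u₁
        (PadicInt.isUnit_intCast_iff.mpr h₃p) d
      exact ⟨![x, y, 0, z], by simp [← h]⟩
  · obtain ⟨x, y, z, h⟩ := PadicInt.exists_mul_sq_add_mul_sq_add_mul_sq_eq hp u₀ u₁
      (PadicInt.isUnit_intCast_iff.mpr h₂p) d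
    exact ⟨![x, y, z, 0], by simp [← h]⟩

theorem escalator_padic_universal {p : ℕ} [Fact p.Prime] (a₁ a₂ a₃ : ℤ)
    (h₁ : 1 ≤ a₁ ∧ a₁ ≤ 2) (h₂ : a₁ ≤ a₂ ∧ a₂ ≤ a₁ + 2) (h₃ : a₂ ≤ a₃ ∧ a₃ ≤ a₁ + a₂ + 2)
    (d : ℤ_[p]) : ∃ x : Fin 4 → ℤ_[p], ∑ i, ((![1, a₁, a₂, a₃] i : ℤ) : ℤ_[p]) * x i ^ 2 = d := by
  rcases eq_or_ne p 2 with rfl | hp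
  · exact escalator_two_adic_universal a₁ a₂ a₃ h₁ h₂ h₃ d
  · exact escalator_padic_universal_of_ne_two hp a₁ a₂ a₃ h₁ h₂ h₃ d

theorem escalation_bounds {a : Fin 5 → ℤ} (h0 : a 0 = 1)
    (hchain : ∀ i : Fin 4,
      a i.castSucc ≤ a i.succ ∧
      a i.succ ≤ (∑ j ∈ Finset.univ.filter (fun j => j ≤ i.castSucc), a j) + 1) :
    (1 ≤ a 1 ∧ a 1 ≤ 2) ∧ (a 1 ≤ a 2 ∧ a 2 ≤ a 1 + 2) ∧ (a 2 ≤ a 3 ∧ a 3 ≤ a 1 + a 2 + 2) := by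
  have h₁ := hchain 0
  have h₂ := hchain 1
  have h₃ := hchain 2
  simp only [Nat.reduceAdd, Finset.sum_filter, Fin.sum_univ_five, Fin.reduceCastSucc,
    Fin.reduceSucc, Fin.reduceLE, Fin.isValue, ↓reduceIte, add_zero] at h₁ h₂ h₃
  omega

theorem stmt17_general (a : Fin 5 → ℤ) (h0 : a 0 = 1)
    (hchain : ∀ i : Fin 4,
      a i.castSucc ≤ a i.succ ∧
      a i.succ ≤ (∑ j ∈ Finset.univ.filter (fun j => j ≤ i.castSucc), a j) + 1) :
    ∀ m : ℤ, 3 ≤ m → ∀ N : ℤ, 0 < N → ∀ (p : ℕ) [Fact p.Prime],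
      ∃ x : Fin 5 → ℤ_[p],
        ∑ i, (a i : ℤ_[p]) * (((m : ℤ_[p]) - 2) * ((x i) ^ 2 - x i) + 2 * x i)
          = 2 * (N : ℤ_[p]) := by
  intro m _ N _ p _
  obtain ⟨h₁, h₂, h₃⟩ := escalation_bounds h0 hchain
  by_cases hb : ‖(m : ℤ_[p]) - 2‖ = ‖(2 : ℤ_[p])‖
  · obtain ⟨e, he⟩ := PadicInt.exists_mul_two_mul_add_one_eq_two hb
    obtain ⟨u, hu⟩ := escalator_padic_universal (a 1) (a 2) (a 3) h₁ h₂ h₃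
      ((2 * e + 1) * (N : ℤ_[p]) + e ^ 2 * ∑ i, (a i : ℤ_[p]))
    refine ⟨fun i => ![u 0, u 1, u 2, u 3, 0] i - e, sum_polygonal_eq_of_sum_mul_sq_eq he ?_⟩
    simpa [Fin.sum_univ_four, Fin.sum_univ_five, h0] using hu
  · obtain ⟨x, hx⟩ := PadicInt.exists_polygonal_eq_of_norm_ne hb N
    refine ⟨Pi.single 0 x, ?_⟩
    rw [Fintype.sum_eq_single 0 fun i hi => by simp [Pi.single_eq_of_ne hi]]
    simp [h0, hx]

/-- for any escalation tuple `(a₁,…,a₅)` (i.e. `a₁ = 1` and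
`aᵢ ≤ a_{i+1} ≤ a₁+⋯+aᵢ+1` for `i = 1,…,4`), the `m`-gonal form `⟨a₁,…,a₅⟩ₘ` locally
represents every positive integer for every `m ≥ 3`, i.e. `Σ aᵢP_m(xᵢ) = N` is solvable over
`ℤ_p` for every prime `p`.  The `m`-gonal equation is stated multiplied by `2` (an equivalent
formulation, since `2` is a nonzerodivisor in `ℤ_p`). -/
theorem stmt17 (a : Fin 5 → ℤ) (ha : ∀ i, 0 < a i) (h0 : a 0 = 1)
    (hchain : ∀ i : Fin 4,
      a i.castSucc ≤ a i.succ ∧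
      a i.succ ≤ (∑ j ∈ Finset.univ.filter (fun j => j ≤ i.castSucc), a j) + 1) :
    ∀ m : ℤ, 3 ≤ m → ∀ N : ℤ, 0 < N → ∀ (p : ℕ) [Fact p.Prime],
      ∃ x : Fin 5 → ℤ_[p],
        ∑ i, (a i : ℤ_[p]) * (((m : ℤ_[p]) - 2) * ((x i) ^ 2 - x i) + 2 * x i)
          = 2 * (N : ℤ_[p]) :=
  stmt17_general a h0 hchain
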